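/- arXiv:1402.5541 — 4 statements merged into one kernel-verified Lean document; each statement's English description precedes it below -/
import Mathlib

section
/- Let n ≥ 2 and let A, B be parabolic subgroups of the braid group B_n with connected associated Coxeter graph, say A = α·B_{[k_A,l_A]}·α⁻¹ and B = β·B_{[k_B,l_B]}·β⁻¹ for fixed α, β ∈ B_n and indices with 1 ≤ k_A < l_A ≤ n, 1 ≤ k_B < l_B ≤ n. Set m_A = l_A − k_A + 1, m_B = l_B − k_B + 1, τ_A = τ_{m_A, k_A−1}, τ_B = τ_{m_B, k_B−1}, and for g, g' ∈ B_n put g₁ = τ_A·α⁻¹·g·β·τ_B⁻¹ and g₁' = τ_A·α⁻¹·g'·β·τ_B⁻¹. Then there exist a ∈ A and b ∈ B with g' = a·g·b if and only if there exist a₁ ∈ B_{[1,m_A]} and b₁ ∈ B_{[1,m_B]} with g₁' = a₁·g₁·b₁. -/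
/-- The braid relations on `n - 1` generators `σ_1, …, σ_{n-1}` (the generator
of index `i : Fin (n-1)` stands for `σ_{i+1}`): the relators
`σ_i σ_{i+1} σ_i (σ_{i+1} σ_i σ_{i+1})⁻¹` for adjacent indices and
`σ_i σ_j (σ_j σ_i)⁻¹` for `|i - j| ≥ 2`. -/
def braidRels (n : ℕ) : Set (FreeGroup (Fin (n - 1))) :=
  {r | (∃ i j : Fin (n - 1), (i : ℕ) + 1 = (j : ℕ) ∧
          r = FreeGroup.of i * FreeGroup.of j * FreeGroup.of i *
                (FreeGroup.of j * FreeGroup.of i * FreeGroup.of j)⁻¹) ∨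
       (∃ i j : Fin (n - 1), (i : ℕ) + 2 ≤ (j : ℕ) ∧
          r = FreeGroup.of i * FreeGroup.of j *
                (FreeGroup.of j * FreeGroup.of i)⁻¹)}

/-- The braid group `B_n` on `n` strands, as the group presented by the
generators `σ_1, …, σ_{n-1}` subject to the braid relations. -/
abbrev BraidGroup (n : ℕ) : Type := PresentedGroup (braidRels n)

/-- The Artin generator `σ_i` of `B_n` (1-based index, `1 ≤ i ≤ n - 1`);
junk value `1` for indices out of range. -/
def σb (n i : ℕ) : BraidGroup n :=
  if h : 1 ≤ i ∧ i - 1 < n - 1 then PresentedGroup.of ⟨i - 1, h.2⟩ else 1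

/-- The descending product `σ_a σ_{a-1} ⋯ σ_b` in `B_n` (equal to `1` when
`b > a`). -/
def descProd (n a b : ℕ) : BraidGroup n :=
  ((List.range (a + 1 - b)).map fun t => σb n (a - t)).prod

/-- The standard parabolic subgroup `B_{[k,m]} = ⟨σ_k, σ_{k+1}, …, σ_{m-1}⟩`
of `B_n`. -/
def stdParabolic (n k m : ℕ) : Subgroup (BraidGroup n) :=
  Subgroup.closure {x | ∃ j : ℕ, k ≤ j ∧ j < m ∧ x = σb n j}

/-- The fundamental element `Δ_n = (σ_1)(σ_2 σ_1) ⋯ (σ_{n-1} σ_{n-2} ⋯ σ_1)`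
of `B_n`. -/
def Δb (n : ℕ) : BraidGroup n :=
  ((List.range (n - 1)).map fun r => descProd n (r + 1) 1).prod

/-- The braid `τ_{p,q} = (σ_p ⋯ σ_1)(σ_{p+1} ⋯ σ_2) ⋯ (σ_{p+q-1} ⋯ σ_q)`,
crossing the strands `p+1, …, p+q` over the strands `1, …, p`
(with `τ_{p,0} = 1`). -/
def τb (n p q : ℕ) : BraidGroup n :=
  ((List.range q).map fun j => descProd n (p + j) (j + 1)).prod

lemma mk_rel {n : ℕ} {r : FreeGroup (Fin (n-1))} (h : r ∈ braidRels n) :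
    PresentedGroup.mk (braidRels n) r = 1 := by
  exact (QuotientGroup.eq_one_iff r).mpr (Subgroup.subset_normalClosure h)

lemma σb_braid (n i : ℕ) (h1 : 1 ≤ i) (h2 : i + 1 ≤ n - 1) :
    σb n i * σb n (i+1) * σb n i = σb n (i+1) * σb n i * σb n (i+1) := by
  have hi : 1 ≤ i ∧ i - 1 < n - 1 := ⟨h1, by omega⟩
  have hj : 1 ≤ i + 1 ∧ i + 1 - 1 < n - 1 := ⟨by omega, by omega⟩
  rw [σb, σb, dif_pos hi, dif_pos hj]
  set i' : Fin (n-1) := ⟨i - 1, hi.2⟩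
  set j' : Fin (n-1) := ⟨i + 1 - 1, hj.2⟩
  have hr : (FreeGroup.of i' * FreeGroup.of j' * FreeGroup.of i' *
      (FreeGroup.of j' * FreeGroup.of i' * FreeGroup.of j')⁻¹) ∈ braidRels n :=
    Or.inl ⟨i', j', by simp [i', j']; omega, rfl⟩
  have := mk_rel hr
  simp only [map_mul, map_inv] at this
  rw [mul_inv_eq_one] at this
  simpa [PresentedGroup.of, map_mul] using this

lemma σb_comm (n i j : ℕ) (h : i + 2 ≤ j) : Commute (σb n i) (σb n j) := by
  rw [σb, σb]
  split_ifs with hi hj hj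
  · have hr : (FreeGroup.of (⟨i-1, hi.2⟩ : Fin (n-1)) * FreeGroup.of (⟨j-1, hj.2⟩ : Fin (n-1)) *
        (FreeGroup.of (⟨j-1, hj.2⟩ : Fin (n-1)) * FreeGroup.of (⟨i-1, hi.2⟩ : Fin (n-1)))⁻¹)
        ∈ braidRels n := Or.inr ⟨_, _, by simp; omega, rfl⟩
    have := mk_rel hr
    simp only [map_mul, map_inv] at this
    rw [mul_inv_eq_one] at this
    unfold Commute SemiconjBy
    simpa [PresentedGroup.of, map_mul] using this
  · exact Commute.one_right _
  · exact Commute.one_left _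
  · exact Commute.one_left _

lemma descProd_top (n a b : ℕ) (h : b ≤ a) (hb : 1 ≤ b) :
    descProd n a b = σb n a * descProd n (a-1) b := by
  rw [descProd, descProd, show a + 1 - b = (a - b) + 1 by omega,
    show (a-1) + 1 - b = a - b by omega, List.range_succ_eq_map]
  simp only [List.map_cons, List.prod_cons, Nat.sub_zero, List.map_map]
  apply congrArg
  apply congrArg List.prod
  apply List.map_congr_left
  intro t _
  simp only [Function.comp_apply]
  congr 1
  omega

lemma comm_descProd (n a b j : ℕ) (h : a + 2 ≤ j) :
    Commute (σb n j) (descProd n a b) := by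
  apply Commute.list_prod_right
  intro x hx
  simp only [List.mem_map] at hx
  obtain ⟨t, _, rfl⟩ := hx
  exact ((σb_comm n (a - t) j (by omega))).symm

lemma conj_desc (n a b j : ℕ) (hb : 1 ≤ b) (hj1 : b + 1 ≤ j) (hj2 : j ≤ a) (ha : a ≤ n - 1) :
    descProd n a b * σb n j = σb n (j-1) * descProd n a b := by
  induction a with
  | zero => omega
  | succ a ih =>
    rcases Nat.lt_or_ge j (a+1) with hlt | hge
    · -- j ≤ a
      rw [descProd_top n (a+1) b (by omega) hb]
      have := ih (by omega) (by omega)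
      rw [show a + 1 - 1 = a by omega, mul_assoc, this, ← mul_assoc, ← mul_assoc]
      congr 1
      exact (σb_comm n (j-1) (a+1) (by omega)).symm.eq
    · -- j = a+1
      have hj : j = a + 1 := by omega
      subst hj
      rw [descProd_top n (a+1) b (by omega) hb]
      simp only [Nat.add_sub_cancel]
      rw [descProd_top n a b (by omega) hb]
      have hcomm : descProd n (a-1) b * σb n (a+1) = σb n (a+1) * descProd n (a-1) b :=
        ((comm_descProd n (a-1) b (a+1) (by omega)).symm).eq
      have hbr := σb_braid n a (by omega) (by omega)
      calc σb n (a+1) * (σb n a * descProd n (a-1) b) * σb n (a+1)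
          = σb n (a+1) * σb n a * (descProd n (a-1) b * σb n (a+1)) := by group
        _ = σb n (a+1) * σb n a * (σb n (a+1) * descProd n (a-1) b) := by rw [hcomm]
        _ = (σb n (a+1) * σb n a * σb n (a+1)) * descProd n (a-1) b := by group
        _ = (σb n a * σb n (a+1) * σb n a) * descProd n (a-1) b := by rw [← hbr]
        _ = σb n a * (σb n (a+1) * (σb n a * descProd n (a-1) b)) := by group

lemma τb_succ (n p q : ℕ) : τb n p (q+1) = τb n p q * descProd n (p + q) (q + 1) := by
  rw [τb, τb, List.range_succ, List.map_append, List.prod_append]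
  simp

lemma conj_τ (n p q i : ℕ) (hi1 : 1 ≤ i) (hi2 : i + 1 ≤ p) (hpq : p + q ≤ n) :
    τb n p q * σb n (q + i) = σb n i * τb n p q := by
  induction q with
  | zero => simp [τb]
  | succ q ih =>
    rw [τb_succ, mul_assoc,
      conj_desc n (p+q) (q+1) (q+1+i) (by omega) (by omega) (by omega) (by omega)]
    rw [show q + 1 + i - 1 = q + i by omega, ← mul_assoc, ih (by omega), mul_assoc]

lemma conj_parab_map (n k l : ℕ) (hk : 1 ≤ k) (hkl : k < l) (hl : l ≤ n) :
    (stdParabolic n k l).map (MulAut.conj (τb n (l-k+1) (k-1))).toMonoidHom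
      = stdParabolic n 1 (l-k+1) := by
  rw [stdParabolic, MonoidHom.map_closure]
  congr 1
  ext x
  simp only [Set.mem_image, Set.mem_setOf_eq, MulEquiv.coe_toMonoidHom, MulAut.conj_apply]
  constructor
  · rintro ⟨y, ⟨j, hj1, hj2, rfl⟩, rfl⟩
    refine ⟨j - k + 1, by omega, by omega, ?_⟩
    have := conj_τ n (l-k+1) (k-1) (j-k+1) (by omega) (by omega) (by omega)
    rw [show k - 1 + (j - k + 1) = j by omega] at this
    rw [this]
    group
  · rintro ⟨i, hi1, hi2, rfl⟩
    refine ⟨σb n (k - 1 + i), ⟨k - 1 + i, by omega, by omega, rfl⟩, ?_⟩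
    have := conj_τ n (l-k+1) (k-1) i (by omega) (by omega) (by omega)
    rw [this]
    group

lemma mem_conj (n k l : ℕ) (hk : 1 ≤ k) (hkl : k < l) (hl : l ≤ n) (x : BraidGroup n) :
    x ∈ stdParabolic n k l ↔
      τb n (l-k+1) (k-1) * x * (τb n (l-k+1) (k-1))⁻¹ ∈ stdParabolic n 1 (l-k+1) := by
  set τ := τb n (l-k+1) (k-1)
  rw [← conj_parab_map n k l hk hkl hl, Subgroup.mem_map_equiv]
  have h : (MulAut.conj τ).symm (τ * x * τ⁻¹) = x := by
    simp [MulAut.conj_symm_apply]; group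
  rw [h]


/-- Lemma 3.1: the double coset problem for a pair of
parabolic subgroups `A = α B_{[k_A,l_A]} α⁻¹`, `B = β B_{[k_B,l_B]} β⁻¹` of
`B_n` with connected associated Coxeter graph reduces to the double coset
problem for the pair of standard parabolic subgroups
`(B_{[1,m_A]}, B_{[1,m_B]}) = (B_{m_A}, B_{m_B})`, via
`g ↦ g₁ = τ_A α⁻¹ g β τ_B⁻¹` where `τ_A = τ_{m_A, k_A - 1}`,
`τ_B = τ_{m_B, k_B - 1}`. -/
theorem DCP_reduction_to_standard_parabolic (n : ℕ) (hn : 2 ≤ n)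
    (kA lA kB lB : ℕ)
    (hkA : 1 ≤ kA) (hklA : kA < lA) (hlA : lA ≤ n)
    (hkB : 1 ≤ kB) (hklB : kB < lB) (hlB : lB ≤ n)
    (α β g g' : BraidGroup n) (A B : Subgroup (BraidGroup n))
    (hA : A = (stdParabolic n kA lA).map (MulAut.conj α).toMonoidHom)
    (hB : B = (stdParabolic n kB lB).map (MulAut.conj β).toMonoidHom)
    (mA mB : ℕ) (hmA : mA = lA - kA + 1) (hmB : mB = lB - kB + 1)
    (τA τB : BraidGroup n)
    (hτA : τA = τb n mA (kA - 1)) (hτB : τB = τb n mB (kB - 1))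
    (g₁ g₁' : BraidGroup n)
    (hg₁ : g₁ = τA * α⁻¹ * g * β * τB⁻¹)
    (hg₁' : g₁' = τA * α⁻¹ * g' * β * τB⁻¹) :
    (∃ a ∈ A, ∃ b ∈ B, g' = a * g * b) ↔
      (∃ a₁ ∈ stdParabolic n 1 mA, ∃ b₁ ∈ stdParabolic n 1 mB,
        g₁' = a₁ * g₁ * b₁) := by
  subst hmA hmB
  have memA : ∀ x : BraidGroup n, x ∈ stdParabolic n kA lA ↔
      τA * x * τA⁻¹ ∈ stdParabolic n 1 (lA - kA + 1) := by
    intro x; rw [hτA]; exact mem_conj n kA lA hkA hklA hlA x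
  have memB : ∀ x : BraidGroup n, x ∈ stdParabolic n kB lB ↔
      τB * x * τB⁻¹ ∈ stdParabolic n 1 (lB - kB + 1) := by
    intro x; rw [hτB]; exact mem_conj n kB lB hkB hklB hlB x
  constructor
  · rintro ⟨a, ha, b, hb, hgg⟩
    rw [hA, Subgroup.mem_map] at ha
    rw [hB, Subgroup.mem_map] at hb
    obtain ⟨a₀, ha₀, ha'⟩ := ha
    obtain ⟨b₀, hb₀, hb'⟩ := hb
    simp only [MulEquiv.coe_toMonoidHom, MulAut.conj_apply] at ha' hb'
    refine ⟨τA * a₀ * τA⁻¹, (memA a₀).mp ha₀,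
      τB * b₀ * τB⁻¹, (memB b₀).mp hb₀, ?_⟩
    rw [hg₁', hg₁, hgg, ← ha', ← hb']
    group
  · rintro ⟨a₁, ha₁, b₁, hb₁, heq⟩
    have hma : τA * (τA⁻¹ * a₁ * τA) * τA⁻¹ = a₁ := by group
    have hmb : τB * (τB⁻¹ * b₁ * τB) * τB⁻¹ = b₁ := by group
    have ha₀ : τA⁻¹ * a₁ * τA ∈ stdParabolic n kA lA :=
      (memA _).mpr (by rw [hma]; exact ha₁)
    have hb₀ : τB⁻¹ * b₁ * τB ∈ stdParabolic n kB lB :=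
      (memB _).mpr (by rw [hmb]; exact hb₁)
    refine ⟨α * (τA⁻¹ * a₁ * τA) * α⁻¹, ?_, β * (τB⁻¹ * b₁ * τB) * β⁻¹, ?_, ?_⟩
    · rw [hA, Subgroup.mem_map]
      exact ⟨_, ha₀, by simp [MulAut.conj_apply]⟩
    · rw [hB, Subgroup.mem_map]
      exact ⟨_, hb₀, by simp [MulAut.conj_apply]⟩
    · have hgp : g' = α * τA⁻¹ * g₁' * τB * β⁻¹ := by rw [hg₁']; group
      rw [hgp, heq, hg₁]
      group
end

section
/- Let G be a group, A and B subgroups of G, and suppose g' = a·g·b with a ∈ A, b ∈ B and g, g' ∈ G. Let x̃ ∈ G satisfy: x̃·c = c·x̃ for every c ∈ C_G(A), and g'·d·g'⁻¹ = x̃·(g·d·g⁻¹)·x̃⁻¹ for every d ∈ C_G(B). Then a⁻¹·x̃ lies in the double centralizer C_G(C_G(A)), and g⁻¹·a⁻¹·x̃·g lies in the double centralizer C_G(C_G(B)). -/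
/-- if `g' = a * g * b` with `a ∈ A`, `b ∈ B`, and `xt ∈ G`
solves the simultaneous conjugacy system (it commutes with every element of
`C_G(A)` and conjugates `g d g⁻¹` to `g' d g'⁻¹` for every `d ∈ C_G(B)`),
then `a⁻¹ * xt` lies in the double centralizer `C_G(C_G(A))` and
`g⁻¹ * a⁻¹ * xt * g` lies in the double centralizer `C_G(C_G(B))`. -/
theorem simCP_solution_in_double_centralizers (G : Type*) [Group G]
    (A B : Subgroup G) (a b g g' : G) (ha : a ∈ A) (hb : b ∈ B)
    (h : g' = a * g * b) (xt : G)
    (hc : ∀ c ∈ Subgroup.centralizer (A : Set G), xt * c = c * xt)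
    (hd : ∀ d ∈ Subgroup.centralizer (B : Set G),
      g' * d * g'⁻¹ = xt * (g * d * g⁻¹) * xt⁻¹) :
    a⁻¹ * xt ∈ Subgroup.centralizer
        ((Subgroup.centralizer (A : Set G) : Subgroup G) : Set G) ∧
      g⁻¹ * a⁻¹ * xt * g ∈ Subgroup.centralizer
        ((Subgroup.centralizer (B : Set G) : Subgroup G) : Set G) := by
  constructor
  · intro c hcA
    have h1 : xt * c = c * xt := hc c hcA
    have h2 : c * a = a * c := (hcA a ha).symm
    calc c * (a⁻¹ * xt) = a⁻¹ * (a * c * a⁻¹) * xt := by group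
      _ = a⁻¹ * (c * a * a⁻¹) * xt := by rw [h2]
      _ = a⁻¹ * (c * xt) := by group
      _ = a⁻¹ * (xt * c) := by rw [h1]
      _ = a⁻¹ * xt * c := by group
  · intro d hdB
    have h1 : g' * d * g'⁻¹ = xt * (g * d * g⁻¹) * xt⁻¹ := hd d hdB
    have h2 : d * b = b * d := (hdB b hb).symm
    rw [h] at h1
    have h3 : a * (g * d * g⁻¹) * a⁻¹ = xt * (g * d * g⁻¹) * xt⁻¹ := by
      calc a * (g * d * g⁻¹) * a⁻¹
          = a * g * (d * b) * b⁻¹ * g⁻¹ * a⁻¹ := by group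
        _ = a * g * (b * d) * b⁻¹ * g⁻¹ * a⁻¹ := by rw [h2]
        _ = a * g * b * d * (a * g * b)⁻¹ := by group
        _ = xt * (g * d * g⁻¹) * xt⁻¹ := h1
    calc d * (g⁻¹ * a⁻¹ * xt * g)
        = g⁻¹ * a⁻¹ * (a * (g * d * g⁻¹) * a⁻¹) * xt * g := by group
      _ = g⁻¹ * a⁻¹ * (xt * (g * d * g⁻¹) * xt⁻¹) * xt * g := by rw [h3]
      _ = g⁻¹ * a⁻¹ * xt * g * d := by group
end

section
/- Let G be a group, z an element of the center of G, and A, B subgroups of G. Fix g, g' ∈ G. Assume: (HA) an element x of G lies in the double centralizer C_G(C_G(A)) if and only if x = z^k·a for some integer k and some a ∈ A; (HB) the analogous statement for B; (Hg) for all ā ∈ A, b̄ ∈ B and every integer m, if g·b̄·g⁻¹·ā⁻¹ = z^m then z^m = 1. Suppose g' = a·g·b for some a ∈ A, b ∈ B, and suppose x̃ ∈ G satisfies x̃·c = c·x̃ for every c ∈ C_G(A) and g'·d·g'⁻¹ = x̃·(g·d·g⁻¹)·x̃⁻¹ for every d ∈ C_G(B). Then for every integer k and every â ∈ A with x̃ =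 z^k·â, the element b̂ := g⁻¹·â⁻¹·g' lies in B, and hence g' = â·g·b̂ with â ∈ A and b̂ ∈ B. -/
/-- abstract form of the main reduction theorem: let `z` be
a central element of `G`, and `A, B ≤ G` subgroups whose double centralizers
are `⟨z⟩ * A` and `⟨z⟩ * B` respectively (hypotheses HA, HB, the Main Lemma in
the braid case), and assume (Hg) that `g * b̄ * g⁻¹ * ā⁻¹ = z^m` forces
`z^m = 1` (Lemma 4 in the braid case). If `g' = a * g * b` is solvable with
`a ∈ A`, `b ∈ B`, and `xt` solves the associated simultaneous conjugacy
system, then for any decomposition `xt = z^k * â` with `â ∈ A`, the element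
`b̂ := g⁻¹ * â⁻¹ * g'` lies in `B`, and hence `g' = â * g * b̂`. -/
theorem simCP_solution_yields_DCP_solution (G : Type*) [Group G]
    (z : G) (hz : z ∈ Subgroup.center G) (A B : Subgroup G) (g g' : G)
    (HA : ∀ x : G,
      x ∈ Subgroup.centralizer
          ((Subgroup.centralizer (A : Set G) : Subgroup G) : Set G) ↔
        ∃ k : ℤ, ∃ a ∈ A, x = z ^ k * a)
    (HB : ∀ x : G,
      x ∈ Subgroup.centralizer
          ((Subgroup.centralizer (B : Set G) : Subgroup G) : Set G) ↔
        ∃ k : ℤ, ∃ b ∈ B, x = z ^ k * b)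
    (Hg : ∀ abar ∈ A, ∀ bbar ∈ B, ∀ m : ℤ,
      g * bbar * g⁻¹ * abar⁻¹ = z ^ m → z ^ m = 1)
    (a b : G) (ha : a ∈ A) (hb : b ∈ B) (hgg : g' = a * g * b)
    (xt : G)
    (hc : ∀ c ∈ Subgroup.centralizer (A : Set G), xt * c = c * xt)
    (hd : ∀ d ∈ Subgroup.centralizer (B : Set G),
      g' * d * g'⁻¹ = xt * (g * d * g⁻¹) * xt⁻¹) :
    ∀ k : ℤ, ∀ ahat ∈ A, xt = z ^ k * ahat →
      g⁻¹ * ahat⁻¹ * g' ∈ B ∧ g' = ahat * g * (g⁻¹ * ahat⁻¹ * g') := by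

  intro k ahat haA hxt
  have hzc : ∀ (n : ℤ) (y : G), y * z ^ n = z ^ n * y := fun n y =>
    Subgroup.mem_center_iff.mp (Subgroup.zpow_mem _ hz n) y
  -- w commutes with all of C(B)
  have hw : (g⁻¹ * xt⁻¹ * g') ∈ Subgroup.centralizer
      ((Subgroup.centralizer (B : Set G) : Subgroup G) : Set G) := by
    rw [Subgroup.mem_centralizer_iff]
    intro d hdB
    have h := hd d hdB
    have h'' : g⁻¹ * (xt⁻¹ * (g' * d * g'⁻¹) * xt) * g = d := by
      rw [h]; group
    calc d * (g⁻¹ * xt⁻¹ * g')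
        = g⁻¹ * (xt⁻¹ * (g' * d * g'⁻¹) * xt) * g * (g⁻¹ * xt⁻¹ * g') := by
          rw [h'']
      _ = g⁻¹ * xt⁻¹ * g' * d := by group
  obtain ⟨m, bbar, hbbar, hm⟩ := (HB _).mp hw
  set n : ℤ := k + m with hn
  -- key identity
  have hkey : g⁻¹ * ahat⁻¹ * g' = z ^ n * bbar := by
    have e1 : g⁻¹ * xt⁻¹ * g' = (z ^ k)⁻¹ * (g⁻¹ * ahat⁻¹ * g') := by
      rw [hxt, mul_inv_rev]
      calc g⁻¹ * (ahat⁻¹ * (z ^ k)⁻¹) * g'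
          = g⁻¹ * ahat⁻¹ * ((z ^ k)⁻¹ * g') := by group
        _ = g⁻¹ * ahat⁻¹ * (g' * (z ^ k)⁻¹) := by
            rw [← zpow_neg, hzc (-k) g']
        _ = g⁻¹ * ahat⁻¹ * g' * (z ^ k)⁻¹ := by group
        _ = (z ^ k)⁻¹ * (g⁻¹ * ahat⁻¹ * g') := by
            rw [← zpow_neg, hzc (-k)]
    have e2 : (z ^ k)⁻¹ * (g⁻¹ * ahat⁻¹ * g') = z ^ m * bbar := by
      rw [← e1, hm]
    calc g⁻¹ * ahat⁻¹ * g'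
        = z ^ k * ((z ^ k)⁻¹ * (g⁻¹ * ahat⁻¹ * g')) := by group
      _ = z ^ k * (z ^ m * bbar) := by rw [e2]
      _ = z ^ n * bbar := by rw [hn, ← mul_assoc, ← zpow_add]
  -- apply Hg
  have e : g⁻¹ * ahat⁻¹ * (a * g * b) = z ^ n * bbar := by
    rw [← hgg]; exact hkey
  have e2 : ahat⁻¹ * a = g * (z ^ n * bbar) * b⁻¹ * g⁻¹ := by
    have := congrArg (fun t => g * t * b⁻¹ * g⁻¹) e
    rw [← this]; group
  have e3 : g * (bbar * b⁻¹) * g⁻¹ * (ahat⁻¹ * a)⁻¹ = z ^ (-n) := by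
    rw [e2]
    calc g * (bbar * b⁻¹) * g⁻¹ * (g * (z ^ n * bbar) * b⁻¹ * g⁻¹)⁻¹
        = g * ((z ^ n)⁻¹ * g⁻¹) := by group
      _ = g * (g⁻¹ * (z ^ n)⁻¹) := by
          rw [← zpow_neg, hzc (-n) g⁻¹]
      _ = z ^ (-n) := by group
  have hz1 : z ^ (-n : ℤ) = 1 :=
    Hg _ (mul_mem (inv_mem haA) ha) _ (mul_mem hbbar (inv_mem hb)) _ e3
  have hzn : z ^ n = 1 := by
    have := congrArg (·⁻¹) hz1
    simpa [zpow_neg] using this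
  have hbhat : g⁻¹ * ahat⁻¹ * g' ∈ B := by
    rw [hkey, hzn, one_mul]; exact hbbar
  exact ⟨hbhat, by group⟩
end

section
/- Let n ≥ 2 and let H₁, H₂ be proper parabolic subgroups of the braid group B_n with connected associated Coxeter graph, i.e. H_i = u_i·B_{[k_i,l_i]}·u_i⁻¹ with u_i ∈ B_n, 1 ≤ k_i < l_i ≤ n and l_i − k_i + 1 < n for i = 1, 2. Let h₁ ∈ H₁, h₂ ∈ H₂ and g ∈ B_n. If g·h₁·g⁻¹·h₂ = Δ_n^{2k} for some integer k, then k = 0 (equivalently, g·h₁·g⁻¹·h₂ = 1). -/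
/-!
Map `B_n` to `ℤ^{n×n} ⋊ S_n`, recording the permutation of the strand positions together with,
for each ordered pair of positions `(a, b)`, how often the strand at `a` crosses over the one at
`b`. The full twist `Δ²` goes to a central element with `1` in every off-diagonal entry, so
`Δ^{2k}` has `k` there. A proper standard parabolic subgroup leaves some strand untouched: its
elements fix that position and have vanishing row and column there.

Conjugating the equation, it becomes `X y = Δ^{2k}` with `y` standard parabolic with free strand
`b`, and `X = c x c⁻¹` with `x` standard parabolic with free strand `i`. Row `a = c(i)` of `X` is a
coboundary `q ↦ f q - f (X⁻¹ q)`, while `X = Δ^{2k} y⁻¹` has row and column `b` equal to `k` off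
the diagonal. If `a ≠ b`, the entry `(a, b)` is both `0` and `k`; if `a = b`, row `a` sums to
both `0` and `(n - 1) k`.
-/

/-- `Perm (Fin n)` acts on the matrices by permuting rows and columns simultaneously; the entries
are added through `Multiplicative ℤ`. -/
abbrev CrossingGroup (n : ℕ) : Type :=
  (Fin n × Fin n → Multiplicative ℤ) ⋊[mulAutArrow] Equiv.Perm (Fin n)

namespace CrossingGroup

variable {n : ℕ}

def crossing (x : CrossingGroup n) (a b : Fin n) : ℤ := (x.left (a, b)).toAdd

lemma ext_crossing {x y : CrossingGroup n} (hr : x.right = y.right)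
    (hc : ∀ a b, crossing x a b = crossing y a b) : x = y :=
  SemidirectProduct.ext (funext fun p => hc p.1 p.2) hr

lemma crossing_mul (x y : CrossingGroup n) (a b : Fin n) :
    crossing (x * y) a b = crossing x a b + crossing y (x.right⁻¹ a) (x.right⁻¹ b) := rfl

lemma crossing_inv (x : CrossingGroup n) (a b : Fin n) :
    crossing x⁻¹ a b = -crossing x (x.right a) (x.right b) := by
  show Multiplicative.toAdd (x.left (x.right⁻¹⁻¹ a, x.right⁻¹⁻¹ b))⁻¹ = _
  rw [inv_inv]
  rfl

@[simp] lemma crossing_one (a b : Fin n) : crossing 1 a b = 0 := rfl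

def adjSwap (n i : ℕ) : Equiv.Perm (Fin n) :=
  if h : i + 1 < n then Equiv.swap ⟨i, by omega⟩ ⟨i + 1, h⟩ else 1

lemma adjSwap_coe {i : ℕ} (h : i + 1 < n) (a : Fin n) :
    (adjSwap n i a : ℕ) = if (a : ℕ) = i then i + 1 else if (a : ℕ) = i + 1 then i else a := by
  rw [adjSwap, dif_pos h, Equiv.swap_apply_def]
  split_ifs <;> simp_all [Fin.ext_iff]

@[simp] lemma adjSwap_inv (i : ℕ) : (adjSwap n i)⁻¹ = adjSwap n i := by
  unfold adjSwap
  split_ifs <;> simp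

/-- The image of `σ_{i+1}`: positions are `0`-based, and the strand at `i` crosses over the one at
`i + 1`. -/
def gen (n i : ℕ) : CrossingGroup n :=
  ⟨fun p => .ofAdd (if (p.1 : ℕ) = i ∧ (p.2 : ℕ) = i + 1 then 1 else 0), adjSwap n i⟩

@[simp] lemma gen_right (i : ℕ) : (gen n i).right = adjSwap n i := rfl

lemma crossing_gen (i : ℕ) (a b : Fin n) :
    crossing (gen n i) a b = if (a : ℕ) = i ∧ (b : ℕ) = i + 1 then 1 else 0 := rfl

lemma gen_eq_one {i : ℕ} (h : n ≤ i + 1) : gen n i = 1 := by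
  refine ext_crossing (by simp [adjSwap, show ¬ i + 1 < n by omega]) fun a b => ?_
  rw [crossing_gen, if_neg (by omega), crossing_one]

lemma gen_braid {i : ℕ} (h : i + 2 < n) :
    gen n i * gen n (i + 1) * gen n i = gen n (i + 1) * gen n i * gen n (i + 1) := by
  refine ext_crossing (Equiv.ext fun a => Fin.ext ?_) fun a b => ?_
  · simp only [SemidirectProduct.mul_right, gen_right, Equiv.Perm.mul_apply,
      adjSwap_coe (show i + 1 < n by omega), adjSwap_coe h]
    grind
  · simp only [crossing_mul, SemidirectProduct.mul_right, gen_right, mul_inv_rev, adjSwap_inv,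
      Equiv.Perm.mul_apply, crossing_gen, adjSwap_coe (show i + 1 < n by omega), adjSwap_coe h]
    grind (splits := 20)

lemma gen_comm {i j : ℕ} (hij : i + 2 ≤ j) (h : j + 1 < n) :
    gen n i * gen n j = gen n j * gen n i := by
  refine ext_crossing (Equiv.ext fun a => Fin.ext ?_) fun a b => ?_
  · simp only [SemidirectProduct.mul_right, gen_right, Equiv.Perm.mul_apply,
      adjSwap_coe (show i + 1 < n by omega), adjSwap_coe h]
    grind
  · simp only [crossing_mul, gen_right, adjSwap_inv, crossing_gen,
      adjSwap_coe (show i + 1 < n by omega), adjSwap_coe h]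
    grind

def freeStrand (a : Fin n) : Subgroup (CrossingGroup n) where
  carrier := {x | x.right a = a ∧ ∀ q, crossing x a q = 0 ∧ crossing x q a = 0}
  one_mem' := ⟨rfl, fun _ => ⟨rfl, rfl⟩⟩
  mul_mem' := by
    rintro x y ⟨hx, hxa⟩ ⟨hy, hya⟩
    have hx' : x.right⁻¹ a = a := by rw [Equiv.Perm.inv_eq_iff_eq, hx]
    refine ⟨by simp [hx, hy], fun q => ?_⟩
    simp only [crossing_mul, hx', hxa, hya, add_zero, and_self]
  inv_mem' := by
    rintro x ⟨hx, hxa⟩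
    refine ⟨by rw [SemidirectProduct.inv_right, Equiv.Perm.inv_eq_iff_eq, hx], fun q => ?_⟩
    simp only [crossing_inv, hx, hxa, neg_zero, and_self]

lemma gen_mem_freeStrand {i : ℕ} {a : Fin n} (ha : (a : ℕ) ≠ i ∧ (a : ℕ) ≠ i + 1) :
    gen n i ∈ freeStrand a := by
  refine ⟨?_, fun q => ⟨?_, ?_⟩⟩
  · by_cases h : i + 1 < n
    · exact Fin.ext (by rw [gen_right, adjSwap_coe h, if_neg ha.1, if_neg ha.2])
    · rw [gen_eq_one (by omega)]; rfl
  all_goals rw [crossing_gen, if_neg (by omega)]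

def fullTwist (n : ℕ) : CrossingGroup n :=
  SemidirectProduct.inl fun p => .ofAdd (if p.1 = p.2 then 0 else 1)

lemma fullTwist_zpow_right (k : ℤ) : (fullTwist n ^ k).right = 1 := by
  rw [fullTwist, ← map_zpow, SemidirectProduct.right_inl]

lemma crossing_fullTwist_zpow (k : ℤ) (a b : Fin n) :
    crossing (fullTwist n ^ k) a b = if a = b then 0 else k := by
  rw [fullTwist, ← map_zpow]
  show Multiplicative.toAdd (Multiplicative.ofAdd (if a = b then (0 : ℤ) else 1) ^ k) = _
  rw [toAdd_zpow, toAdd_ofAdd]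
  split_ifs <;> simp

lemma commute_fullTwist (x : CrossingGroup n) : Commute (fullTwist n) x := by
  have hr : (fullTwist n).right = 1 := by simpa using fullTwist_zpow_right (n := n) 1
  have hc : ∀ a b, crossing (fullTwist n) a b = if a = b then 0 else 1 := by
    simpa using crossing_fullTwist_zpow (n := n) 1
  refine ext_crossing (by simp [hr]) fun a b => ?_
  simp only [crossing_mul, hr, hc, inv_one, Equiv.Perm.one_apply, EmbeddingLike.apply_eq_iff_eq]
  ring

section Conjugate

variable {c x : CrossingGroup n} {i : Fin n}

lemma crossing_conj_of_mem_freeStrand (hx : x ∈ freeStrand i) (q : Fin n) :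
    crossing (c * x * c⁻¹) (c.right i) q =
      crossing c (c.right i) q - crossing c (c.right i) ((c * x * c⁻¹).right⁻¹ q) := by
  have hx' : x.right.symm i = i := Equiv.symm_apply_eq _ |>.2 hx.1.symm
  simp [crossing_mul, crossing_inv, hx', (hx.2 _).1, sub_eq_add_neg]

lemma sum_crossing_conj_of_mem_freeStrand (hx : x ∈ freeStrand i) :
    ∑ q, crossing (c * x * c⁻¹) (c.right i) q = 0 := by
  simp only [crossing_conj_of_mem_freeStrand hx, Finset.sum_sub_distrib,
    Equiv.sum_comp (c * x * c⁻¹).right⁻¹ (crossing c (c.right i)), sub_self]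

end Conjugate

theorem eq_zero_of_conj_mul_eq_fullTwist_zpow {c x y : CrossingGroup n} {i b : Fin n} {k : ℤ}
    (hn : 2 ≤ n) (hx : x ∈ freeStrand i) (hy : y ∈ freeStrand b)
    (h : c * x * c⁻¹ * y = fullTwist n ^ k) : k = 0 := by
  have hX : c * x * c⁻¹ = fullTwist n ^ k * y⁻¹ := eq_mul_inv_of_mul_eq h
  have hcross (p q : Fin n) : crossing (c * x * c⁻¹) p q =
      (if p = q then 0 else k) - crossing y (y.right p) (y.right q) := by
    rw [hX, crossing_mul, fullTwist_zpow_right, crossing_inv, crossing_fullTwist_zpow]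
    simp [sub_eq_add_neg]
  by_cases hib : c.right i = b
  · have hsum := sum_crossing_conj_of_mem_freeStrand (c := c) hx
    simp only [hcross, hib, hy.1, (hy.2 _).1, sub_zero] at hsum
    have hrow : ∑ q, (if b = q then 0 else k) = (n - 1) * k := by
      simp [Finset.sum_ite, Finset.filter_ne, Finset.card_erase_of_mem,
        Nat.cast_sub (by omega : 1 ≤ n)]
    rw [hrow] at hsum
    exact (mul_eq_zero.1 hsum).resolve_left (by omega)
  · have hXb : (c * x * c⁻¹).right⁻¹ b = b := by
      rw [hX]; simp [fullTwist_zpow_right, hy.1]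
    have hab := crossing_conj_of_mem_freeStrand (c := c) hx b
    rw [hXb, sub_self, hcross, if_neg hib, hy.1, (hy.2 _).2, sub_zero] at hab
    exact hab

end CrossingGroup

open CrossingGroup

namespace BraidGroup

variable {n : ℕ}

lemma gen_braidRels (n : ℕ) :
    ∀ r ∈ braidRels n, FreeGroup.lift (fun i : Fin (n - 1) => gen n i) r = 1 := by
  rintro r (⟨i, j, hij, rfl⟩ | ⟨i, j, hij, rfl⟩) <;>
    simp only [map_mul, map_inv, FreeGroup.lift_apply_of, mul_inv_eq_one]
  · rw [← hij]
    exact gen_braid (by omega)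
  · exact gen_comm hij (by omega)

def crossingRep (n : ℕ) : BraidGroup n →* CrossingGroup n :=
  PresentedGroup.toGroup (gen_braidRels n)

lemma crossingRep_σb {i : ℕ} (hi : 1 ≤ i) : crossingRep n (σb n i) = gen n (i - 1) := by
  unfold σb
  split_ifs with h
  · exact PresentedGroup.toGroup.of _
  · rw [map_one, gen_eq_one (by omega)]

lemma stdParabolic_le_comap_freeStrand {k m : ℕ} {a : Fin n} (ha : (a : ℕ) + 1 < k ∨ m ≤ a) :
    stdParabolic n k m ≤ (freeStrand a).comap (crossingRep n) := by
  refine (Subgroup.closure_le _).2 ?_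
  rintro _ ⟨j, hkj, hjm, rfl⟩
  rcases Nat.eq_zero_or_pos j with rfl | hj
  · simp [σb]
  · show crossingRep n (σb n j) ∈ freeStrand a
    rw [crossingRep_σb hj]
    exact gen_mem_freeStrand (by omega)

lemma exists_stdParabolic_le_comap_freeStrand {k m : ℕ} (h : m - k + 1 < n) :
    ∃ a : Fin n, stdParabolic n k m ≤ (freeStrand a).comap (crossingRep n) := by
  by_cases hk : 2 ≤ k
  · exact ⟨⟨0, by omega⟩, stdParabolic_le_comap_freeStrand (Or.inl (by simp; omega))⟩
  · exact ⟨⟨m, by omega⟩, stdParabolic_le_comap_freeStrand (Or.inr le_rfl)⟩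

lemma descProd_succ (n a : ℕ) : descProd n (a + 1) 1 = σb n (a + 1) * descProd n a 1 := by
  unfold descProd
  rw [Nat.add_sub_cancel, Nat.add_sub_cancel, List.range_succ_eq_map, List.map_cons,
    List.map_map, List.prod_cons, Nat.sub_zero]
  congr 2
  exact List.map_congr_left fun t _ => by simp only [Function.comp_apply]; congr 1; omega

lemma crossingRep_descProd_right_coe {a : ℕ} (ha : a < n) (x : Fin n) :
    ((crossingRep n (descProd n a 1)).right x : ℕ) =
      if (x : ℕ) = 0 then a else if (x : ℕ) ≤ a then x - 1 else x := by
  induction a with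
  | zero => simp [descProd]; grind
  | succ a ih =>
    rw [descProd_succ, map_mul, crossingRep_σb (by omega), Nat.add_sub_cancel,
      SemidirectProduct.mul_right, Equiv.Perm.mul_apply, gen_right, adjSwap_coe ha,
      ih (by omega)]
    grind

lemma crossing_crossingRep_descProd {a : ℕ} (ha : a < n) (x y : Fin n) :
    crossing (crossingRep n (descProd n a 1)) x y = if (x : ℕ) < a ∧ (y : ℕ) = a then 1 else 0 := by
  induction a generalizing x y with
  | zero => simp [descProd]
  | succ a ih =>
    rw [descProd_succ, map_mul, crossingRep_σb (by omega), Nat.add_sub_cancel, crossing_mul,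
      gen_right, adjSwap_inv, crossing_gen, ih (by omega), adjSwap_coe ha, adjSwap_coe ha]
    grind

/-- The fundamental braid of the first `m + 1` strands, so that `Δb n = halfTwist n (n - 1)`. -/
def halfTwist (n m : ℕ) : BraidGroup n :=
  ((List.range m).map fun r => descProd n (r + 1) 1).prod

lemma halfTwist_succ (n m : ℕ) : halfTwist n (m + 1) = halfTwist n m * descProd n (m + 1) 1 := by
  rw [halfTwist, halfTwist, List.range_succ, List.map_append, List.prod_append, List.map_singleton,
    List.prod_singleton]

lemma crossingRep_halfTwist_right_coe {m : ℕ} (hm : m < n) (x : Fin n) :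
    ((crossingRep n (halfTwist n m)).right x : ℕ) = if (x : ℕ) ≤ m then m - x else x := by
  induction m generalizing x with
  | zero => simp [halfTwist]
  | succ m ih =>
    rw [halfTwist_succ, map_mul, SemidirectProduct.mul_right, Equiv.Perm.mul_apply,
      ih (by omega), crossingRep_descProd_right_coe hm]
    grind

lemma crossingRep_halfTwist_right_inv {m : ℕ} (hm : m < n) :
    (crossingRep n (halfTwist n m)).right⁻¹ = (crossingRep n (halfTwist n m)).right := by
  refine Equiv.ext fun x => (Equiv.Perm.inv_eq_iff_eq).2 (Fin.ext ?_)
  rw [crossingRep_halfTwist_right_coe hm,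
    crossingRep_halfTwist_right_coe hm]
  grind

lemma crossing_crossingRep_halfTwist {m : ℕ} (hm : m < n) (x y : Fin n) :
    crossing (crossingRep n (halfTwist n m)) x y = if (x : ℕ) < y ∧ (y : ℕ) ≤ m then 1 else 0 := by
  induction m generalizing x y with
  | zero => simp [halfTwist]; omega
  | succ m ih =>
    rw [halfTwist_succ, map_mul, crossing_mul, ih (by omega),
      crossingRep_halfTwist_right_inv (by omega),
      crossing_crossingRep_descProd hm, crossingRep_halfTwist_right_coe (by omega),
      crossingRep_halfTwist_right_coe (by omega)]
    grind

lemma crossingRep_Δb_sq (hn : 0 < n) : crossingRep n (Δb n ^ 2) = fullTwist n := by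
  have hΔ : Δb n = halfTwist n (n - 1) := rfl
  have hr := crossingRep_halfTwist_right_inv (show n - 1 < n by omega)
  refine ext_crossing ?_ fun a b => ?_
  · rw [map_pow, pow_two, SemidirectProduct.mul_right, hΔ]
    nth_rw 1 [← hr]
    rw [inv_mul_cancel]
    simpa using (fullTwist_zpow_right (n := n) 1).symm
  · rw [map_pow, pow_two, crossing_mul, hΔ, hr, crossing_crossingRep_halfTwist (by omega),
      crossing_crossingRep_halfTwist (by omega), crossingRep_halfTwist_right_coe (by omega),
      crossingRep_halfTwist_right_coe (by omega)]
    have := crossing_fullTwist_zpow (n := n) 1 a b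
    rw [zpow_one] at this
    simp only [this, Fin.ext_iff]
    grind

lemma crossingRep_Δb_zpow_two_mul (hn : 0 < n) (k : ℤ) :
    crossingRep n (Δb n ^ (2 * k)) = fullTwist n ^ k := by
  rw [zpow_mul, zpow_ofNat, map_zpow, crossingRep_Δb_sq hn]

end BraidGroup

open BraidGroup

theorem central_power_from_proper_parabolics_general (n : ℕ)
    (k₁ l₁ k₂ l₂ : ℕ)
    (hp₁ : l₁ - k₁ + 1 < n)
    (hp₂ : l₂ - k₂ + 1 < n)
    (u₁ u₂ : BraidGroup n) (H₁ H₂ : Subgroup (BraidGroup n))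
    (hH₁ : H₁ = (stdParabolic n k₁ l₁).map (MulAut.conj u₁).toMonoidHom)
    (hH₂ : H₂ = (stdParabolic n k₂ l₂).map (MulAut.conj u₂).toMonoidHom)
    (h₁ h₂ g : BraidGroup n) (hh₁ : h₁ ∈ H₁) (hh₂ : h₂ ∈ H₂)
    (k : ℤ) (heq : g * h₁ * g⁻¹ * h₂ = Δb n ^ (2 * k)) :
    k = 0 := by
  subst hH₁ hH₂
  obtain ⟨x₁, hx₁, rfl⟩ := Subgroup.mem_map.1 hh₁
  obtain ⟨x₂, hx₂, rfl⟩ := Subgroup.mem_map.1 hh₂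
  obtain ⟨i₁, hi₁⟩ := exists_stdParabolic_le_comap_freeStrand hp₁
  obtain ⟨i₂, hi₂⟩ := exists_stdParabolic_le_comap_freeStrand hp₂
  set c := u₂⁻¹ * g * u₁
  have hconj : c * x₁ * c⁻¹ * x₂ = u₂⁻¹ * Δb n ^ (2 * k) * u₂ := by
    rw [← heq]
    simp only [c, MulEquiv.coe_toMonoidHom, MulAut.conj_apply]
    group
  have hX : crossingRep n (c * x₁ * c⁻¹ * x₂) = fullTwist n ^ k := by
    rw [hconj, map_mul, map_mul, map_inv, crossingRep_Δb_zpow_two_mul (by omega),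
      ((commute_fullTwist _).zpow_left k).symm.inv_mul_cancel]
  rw [map_mul, map_mul, map_mul, map_inv] at hX
  exact eq_zero_of_conj_mul_eq_fullTwist_zpow (by omega) (hi₁ hx₁) (hi₂ hx₂) hX

/-- Lemma 4: let `H₁ = u₁ B_{[k₁,l₁]} u₁⁻¹` and
`H₂ = u₂ B_{[k₂,l₂]} u₂⁻¹` be proper parabolic subgroups of `B_n` with
connected associated Coxeter graph (properness: `l_i - k_i + 1 < n`). If
`h₁ ∈ H₁`, `h₂ ∈ H₂`, `g ∈ B_n` and `g h₁ g⁻¹ h₂ = Δ_n^{2k}` for some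
`k : ℤ`, then `k = 0`. -/
theorem central_power_from_proper_parabolics (n : ℕ) (hn : 2 ≤ n)
    (k₁ l₁ k₂ l₂ : ℕ)
    (hk₁ : 1 ≤ k₁) (hkl₁ : k₁ < l₁) (hl₁ : l₁ ≤ n) (hp₁ : l₁ - k₁ + 1 < n)
    (hk₂ : 1 ≤ k₂) (hkl₂ : k₂ < l₂) (hl₂ : l₂ ≤ n) (hp₂ : l₂ - k₂ + 1 < n)
    (u₁ u₂ : BraidGroup n) (H₁ H₂ : Subgroup (BraidGroup n))
    (hH₁ : H₁ = (stdParabolic n k₁ l₁).map (MulAut.conj u₁).toMonoidHom)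
    (hH₂ : H₂ = (stdParabolic n k₂ l₂).map (MulAut.conj u₂).toMonoidHom)
    (h₁ h₂ g : BraidGroup n) (hh₁ : h₁ ∈ H₁) (hh₂ : h₂ ∈ H₂)
    (k : ℤ) (heq : g * h₁ * g⁻¹ * h₂ = Δb n ^ (2 * k)) :
    k = 0 :=
  central_power_from_proper_parabolics_general n k₁ l₁ k₂ l₂ hp₁ hp₂ u₁ u₂ H₁ H₂ hH₁ hH₂ h₁ h₂ g hh₁
    hh₂ k heq
end
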